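/- A regular tetrahedron in ℝ³ with edge length √2 has width 1, where the width is the minimal distance between two parallel supporting planes. -/

import Mathlib

open scoped RealInnerProductSpace

/-- Points of `ℝ³` with the Euclidean metric. -/
def P3 (x y z : ℝ) : EuclideanSpace ℝ (Fin 3) := WithLp.toLp 2 ![x, y, z]

/-- The width of a body `K ⊆ ℝ³`: the infimum over unit directions `u` of the
breadth `sup_{x ∈ K} ⟪x, u⟫ − inf_{x ∈ K} ⟪x, u⟫`. -/
noncomputable def width (K : Set (EuclideanSpace ℝ (Fin 3))) : ℝ :=
  ⨅ u : {u : EuclideanSpace ℝ (Fin 3) // ‖u‖ = 1},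
    (sSup ((fun x => ⟪x, (u : EuclideanSpace ℝ (Fin 3))⟫) '' K) -
      sInf ((fun x => ⟪x, (u : EuclideanSpace ℝ (Fin 3))⟫) '' K))

/-!
A linear functional takes its extreme values on a convex hull at the generating points, so the
breadth of the tetrahedron in a unit direction `u = (a, b, c)` is the spread of the four numbers
`0, a + b, a + c, b + c`. Their pairwise differences are `±(a ± b)`, `±(a ± c)`, `±(b ± c)`, so the
spread is at least `|a| + |b|`, `|a| + |c|` and `|b| + |c|`; if `|a|` is the largest coordinate then
`1 = a² + b² + c² ≤ (|a| + |b|)(|a| + |c|)`, so the spread is at least `1`. The direction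
`(1, 0, 0)` separates `{(0,0,0), (0,1,1)}` from `{(1,1,0), (1,0,1)}` at distance exactly `1`.
-/

lemma abs_add_abs_le {a b d : ℝ} (h₁ : |a + b| ≤ d) (h₂ : |a - b| ≤ d) : |a| + |b| ≤ d := by
  rw [abs_le] at h₁ h₂
  rcases abs_cases a with ⟨ha, _⟩ | ⟨ha, _⟩ <;> rcases abs_cases b with ⟨hb, _⟩ | ⟨hb, _⟩ <;>
    linarith

lemma one_le_of_abs_add_abs_le {a b c d : ℝ} (h : a ^ 2 + b ^ 2 + c ^ 2 = 1)
    (hab : |a| + |b| ≤ d) (hac : |a| + |c| ≤ d) (hbc : |b| + |c| ≤ d) : 1 ≤ d := by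
  have ha := abs_nonneg a
  have hb := abs_nonneg b
  have hc := abs_nonneg c
  rw [← sq_abs a, ← sq_abs b, ← sq_abs c] at h
  rcases le_total |b| |a| with h1 | h1 <;> rcases le_total |c| |a| with h2 | h2 <;>
    rcases le_total |c| |b| with h3 | h3 <;>
    nlinarith [mul_nonneg hb hc, mul_nonneg ha hc, mul_nonneg ha hb]

lemma Real.csSup_convexHull {t : Set ℝ} (ht : BddAbove t) : sSup (convexHull ℝ t) = sSup t := by
  rcases t.eq_empty_or_nonempty with rfl | hne
  · simp
  have hle : convexHull ℝ t ⊆ Set.Iic (sSup t) :=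
    convexHull_min (fun _ hx => le_csSup ht hx) (convex_Iic _)
  exact le_antisymm (csSup_le hne.convexHull hle)
    (csSup_le_csSup ⟨_, hle⟩ hne (subset_convexHull ℝ t))

lemma Real.csInf_convexHull {t : Set ℝ} (ht : BddBelow t) : sInf (convexHull ℝ t) = sInf t := by
  rcases t.eq_empty_or_nonempty with rfl | hne
  · simp
  have hge : convexHull ℝ t ⊆ Set.Ici (sInf t) :=
    convexHull_min (fun _ hx => csInf_le ht hx) (convex_Ici _)
  exact le_antisymm (csInf_le_csInf ⟨_, hge⟩ hne (subset_convexHull ℝ t))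
    (le_csInf hne.convexHull hge)

section Breadth

variable {E : Type*} [NormedAddCommGroup E] [InnerProductSpace ℝ E]

noncomputable def breadth (K : Set E) (u : E) : ℝ :=
  sSup ((⟪·, u⟫) '' K) - sInf ((⟪·, u⟫) '' K)

lemma breadth_convexHull {s : Set E} (hs : s.Finite) (u : E) :
    breadth (convexHull ℝ s) u = breadth s u := by
  have himage : (⟪·, u⟫) '' convexHull ℝ s = convexHull ℝ ((⟪·, u⟫) '' s) :=
    ((innerₗ E).flip u).image_convexHull s
  rw [breadth, breadth, himage, Real.csSup_convexHull (hs.image _).bddAbove,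
    Real.csInf_convexHull (hs.image _).bddBelow]

lemma abs_inner_sub_inner_le_breadth {s : Set E} (hs : s.Finite) (u : E) {x y : E}
    (hx : x ∈ s) (hy : y ∈ s) : |⟪x, u⟫ - ⟪y, u⟫| ≤ breadth s u := by
  have hsup := fun z (hz : z ∈ s) => le_csSup (hs.image (⟪·, u⟫)).bddAbove ⟨z, hz, rfl⟩
  have hinf := fun z (hz : z ∈ s) => csInf_le (hs.image (⟪·, u⟫)).bddBelow ⟨z, hz, rfl⟩
  rw [abs_sub_le_iff, breadth]
  constructor <;> linarith [hsup x hx, hsup y hy, hinf x hx, hinf y hy]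

lemma breadth_le {s : Set E} (hs : s.Nonempty) {u : E} {m M : ℝ}
    (h : ∀ x ∈ s, m ≤ ⟪x, u⟫ ∧ ⟪x, u⟫ ≤ M) : breadth s u ≤ M - m := by
  have hsup : sSup ((⟪·, u⟫) '' s) ≤ M :=
    csSup_le (hs.image _) (Set.forall_mem_image.2 fun x hx => (h x hx).2)
  have hinf : m ≤ sInf ((⟪·, u⟫) '' s) :=
    le_csInf (hs.image _) (Set.forall_mem_image.2 fun x hx => (h x hx).1)
  exact sub_le_sub hsup hinf

end Breadth

lemma width_eq_iInf_breadth (K : Set (EuclideanSpace ℝ (Fin 3))) :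
    width K = ⨅ u : {u : EuclideanSpace ℝ (Fin 3) // ‖u‖ = 1}, breadth K u := rfl

@[simp] lemma P3_apply_zero (x y z : ℝ) : P3 x y z 0 = x := rfl
@[simp] lemma P3_apply_one (x y z : ℝ) : P3 x y z 1 = y := rfl
@[simp] lemma P3_apply_two (x y z : ℝ) : P3 x y z 2 = z := rfl

@[simp]
lemma inner_P3 (x y z : ℝ) (u : EuclideanSpace ℝ (Fin 3)) :
    ⟪P3 x y z, u⟫ = x * u 0 + y * u 1 + z * u 2 := by
  simp [P3, PiLp.inner_apply, Fin.sum_univ_three, mul_comm]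

def tetrahedronVertices : Set (EuclideanSpace ℝ (Fin 3)) :=
  {P3 0 0 0, P3 1 1 0, P3 1 0 1, P3 0 1 1}

lemma tetrahedronVertices_finite : tetrahedronVertices.Finite := by
  simp [tetrahedronVertices]

lemma one_le_breadth_tetrahedronVertices {u : EuclideanSpace ℝ (Fin 3)} (hu : ‖u‖ = 1) :
    1 ≤ breadth tetrahedronVertices u := by
  have hnorm : u 0 ^ 2 + u 1 ^ 2 + u 2 ^ 2 = 1 := by
    simpa [Fin.sum_univ_three, hu] using (EuclideanSpace.real_norm_sq_eq u).symm
  have h {x y} (hx : x ∈ tetrahedronVertices) (hy : y ∈ tetrahedronVertices) :=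
    abs_inner_sub_inner_le_breadth tetrahedronVertices_finite u hx hy
  have v₀ : P3 0 0 0 ∈ tetrahedronVertices := by simp [tetrahedronVertices]
  have v₁ : P3 1 1 0 ∈ tetrahedronVertices := by simp [tetrahedronVertices]
  have v₂ : P3 1 0 1 ∈ tetrahedronVertices := by simp [tetrahedronVertices]
  have v₃ : P3 0 1 1 ∈ tetrahedronVertices := by simp [tetrahedronVertices]
  refine one_le_of_abs_add_abs_le hnorm (abs_add_abs_le ?_ ?_) (abs_add_abs_le ?_ ?_)
    (abs_add_abs_le ?_ ?_)
  · simpa using h v₁ v₀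
  · simpa using h v₂ v₃
  · simpa using h v₂ v₀
  · convert h v₁ v₃ using 2
    simp only [inner_P3]
    ring
  · simpa using h v₃ v₀
  · simpa using h v₁ v₂

lemma breadth_tetrahedronVertices_le_one : breadth tetrahedronVertices (P3 1 0 0) ≤ 1 := by
  simpa using breadth_le (m := 0) (M := 1) ⟨P3 0 0 0, by simp [tetrahedronVertices]⟩
    (by simp [tetrahedronVertices])

/-- A regular tetrahedron with edge length `√2`, realized as the convex hull of
`(0,0,0), (1,1,0), (1,0,1), (0,1,1)`, has width `1`. -/
theorem regular_tetrahedron_width_one :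
    width (convexHull ℝ ({P3 0 0 0, P3 1 1 0, P3 1 0 1, P3 0 1 1} :
      Set (EuclideanSpace ℝ (Fin 3)))) = 1 := by
  have hu₀ : ‖P3 1 0 0‖ = 1 := by simp [EuclideanSpace.norm_eq, Fin.sum_univ_three]
  have hge (u : {u : EuclideanSpace ℝ (Fin 3) // ‖u‖ = 1}) :
      1 ≤ breadth (convexHull ℝ tetrahedronVertices) u := by
    rw [breadth_convexHull tetrahedronVertices_finite]
    exact one_le_breadth_tetrahedronVertices u.2
  have hle : breadth (convexHull ℝ tetrahedronVertices) (P3 1 0 0) ≤ 1 := by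
    rw [breadth_convexHull tetrahedronVertices_finite]
    exact breadth_tetrahedronVertices_le_one
  have : Nonempty {u : EuclideanSpace ℝ (Fin 3) // ‖u‖ = 1} := ⟨⟨_, hu₀⟩⟩
  change width (convexHull ℝ tetrahedronVertices) = 1
  rw [width_eq_iInf_breadth]
  exact le_antisymm ((ciInf_le ⟨1, Set.forall_mem_range.2 hge⟩ ⟨_, hu₀⟩).trans hle)
    (le_ciInf hge)
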